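/- Let T be a partition tree for length-n strings X and Y of maximum degree ℓ and height at most h, and let L ≥ 0. If ED(X, Y) ≤ L, then TD^L(X, Y) ≤ (2(ℓ−1)h + 1) · ED(X, Y), where TD^L(X, Y) is the L-shift-restricted tree distance evaluated at the root with shift 0. -/

import Mathlib

/-- Cost structure for the Levenshtein edit distance (formerly in Mathlib). -/
structure Levenshtein.Cost (α β δ : Type*) where
  delete : α → δ
  insert : β → δ
  substitute : α → β → δ

/-- The default cost structure: unit costs, free matching substitution (formerly in Mathlib). -/
def Levenshtein.defaultCost {α : Type*} [DecidableEq α] : Levenshtein.Cost α α ℕ where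
  delete _ := 1
  insert _ := 1
  substitute a b := if a = b then 0 else 1

/-- Inner step of the Levenshtein dynamic program (formerly in Mathlib). -/
def Levenshtein.impl {α β δ : Type*} [Add δ] [Min δ] (C : Levenshtein.Cost α β δ)
    (xs : List α) (y : β) (d : {r : List δ // 0 < r.length}) : {r : List δ // 0 < r.length} :=
  let ⟨ds, w⟩ := d
  xs.zip (ds.zip ds.tail) |>.foldr
    (init := ⟨[C.insert y + ds.getLast (List.length_pos_iff.mp w)], by simp⟩)
    (fun ⟨x, d₀, d₁⟩ ⟨r, w⟩ =>
      ⟨min (C.delete x + r[0]) (min (C.insert y + d₀) (C.substitute x y + d₁)) :: r, by simp⟩)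

/-- Levenshtein distances between all suffixes of `xs` and `ys` (formerly in Mathlib). -/
def suffixLevenshtein {α β δ : Type*} [Zero δ] [Add δ] [Min δ] (C : Levenshtein.Cost α β δ)
    (xs : List α) (ys : List β) : {r : List δ // 0 < r.length} :=
  ys.foldr
    (Levenshtein.impl C xs)
    (xs.foldr (init := ⟨[0], by simp⟩) (fun a ⟨r, w⟩ => ⟨(C.delete a + r[0]) :: r, by simp⟩))

/-- The Levenshtein edit distance with cost structure `C` (formerly in Mathlib). -/
def levenshtein {α β δ : Type*} [Zero δ] [Add δ] [Min δ] (C : Levenshtein.Cost α β δ)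
    (xs : List α) (ys : List β) : δ :=
  let ⟨r, _⟩ := suffixLevenshtein C xs ys
  r[0]

/-- Levenshtein edit distance between two lists (unit costs). -/
def ED {α : Type*} [DecidableEq α] (X Y : List α) : ℕ :=
  levenshtein Levenshtein.defaultCost X Y

/-- The fragment `X[a..b)` (with out-of-range indices clamped). -/
def strSlice {α : Type*} (X : List α) (a b : ℕ) : List α := (X.drop a).take (b - a)

/-- The fragment `Y[a..b)` for integer indices (clamped to the valid range). -/
def strSliceZ {α : Type*} (Y : List α) (a b : ℤ) : List α :=
  (Y.drop a.toNat).take (b.toNat - a.toNat)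

/-- A (node of a) partition tree: a leaf spans one position, an internal node records
the interval of leaves it spans and its list of children. -/
inductive PTree where
  | leaf (i : ℕ) : PTree
  | node (lo hi : ℕ) (children : List PTree) : PTree

mutual
/-- Well-formedness: the tree `t` spans exactly the interval `[lo, hi)` of leaves and
the children of each node span consecutive subintervals. -/
inductive PTree.WF : PTree → ℕ → ℕ → Prop where
  | leaf (i : ℕ) : PTree.WF (.leaf i) i (i + 1)
  | node (lo hi : ℕ) (cs : List PTree) (hne : cs ≠ []) (h : PTree.WFs cs lo hi) :
      PTree.WF (.node lo hi cs) lo hi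
/-- A list of trees spans consecutive intervals covering `[a, c)`. -/
inductive PTree.WFs : List PTree → ℕ → ℕ → Prop where
  | nil (a : ℕ) : PTree.WFs [] a a
  | cons (t : PTree) (ts : List PTree) (a b c : ℕ) :
      PTree.WF t a b → PTree.WFs ts b c → PTree.WFs (t :: ts) a c
end

/-- The `L`-shift-restricted tree distance `TD^L_{v,s}`: at a leaf it is the edit distance
of the corresponding (shifted) fragments, at an internal node it is the sum over children
of `min_{s' ∈ [−L,L]} (TD^L_{child,s'} + 2|s − s'|)`. -/
noncomputable def TD {α : Type*} [DecidableEq α] (X Y : List α) (L : ℕ) : PTree → ℤ → ℕ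
  | .leaf i, s => ED (strSlice X i (i + 1)) (strSliceZ Y ((i : ℤ) + s) ((i : ℤ) + 1 + s))
  | .node _ _ cs, s =>
      (cs.attach.map (fun c =>
        (Finset.Icc (-(L : ℤ)) (L : ℤ)).inf'
          ⟨0, by simp⟩
          (fun s' => TD X Y L c.1 s' + 2 * (s - s').natAbs))).sum
termination_by t _ => sizeOf t
decreasing_by
  have := List.sizeOf_lt_of_mem c.2
  simp only [PTree.node.sizeOf_spec]
  omega

/-- The height of a partition tree: maximum distance from the root to a leaf. -/
def PTree.height : PTree → ℕ
  | .leaf _ => 0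
  | .node _ _ cs => (cs.attach.map (fun c => PTree.height c.1)).foldr max 0 + 1
termination_by t => sizeOf t
decreasing_by
  have := List.sizeOf_lt_of_mem c.2
  simp only [PTree.node.sizeOf_spec]
  omega

/-- The maximum degree (number of children of a node) of a partition tree. -/
def PTree.maxDeg : PTree → ℕ
  | .leaf _ => 0
  | .node _ _ cs => max cs.length ((cs.attach.map (fun c => PTree.maxDeg c.1)).foldr max 0)
termination_by t => sizeOf t
decreasing_by
  have := List.sizeOf_lt_of_mem c.2
  simp only [PTree.node.sizeOf_spec]
  omega

/-!
Fix an optimal alignment of `X` with `Y`, with shift `s_p` and cost `C_p` on the prefix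
`X[0..p)`, so that `|s_q - s_p| ≤ C_q - C_p`. By induction on the height, a node spanning
`[a, b)` satisfies `TD_{v, s_a} ≤ (2(ℓ-1)H + 1)(C_b - C_a)`: the child spanning
`[a_i, a_{i+1})` is evaluated at the shift `s_{a_i}`, which costs an extra
`2|s_a - s_{a_i}| ≤ 2(C_b - C_a)` for each of the at most `ℓ - 1` children other than the
first. All these shifts lie in `[-L, L]` because `|s_p| ≤ C_n ≤ ED(X, Y) ≤ L`, and at the root
`s_0 = 0`.
-/

theorem List.take_one_drop_eq_toList_getElem? {α : Type*} (l : List α) (k : ℕ) :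
    (l.drop k).take 1 = l[k]?.toList := by
  induction l generalizing k with
  | nil => simp
  | cons a l ih => cases k <;> simp [ih]

namespace Levenshtein

variable {α β δ : Type*} [Add δ] [Min δ] (C : Cost α β δ)

theorem impl_cons_val (x : α) (xs : List α) (y : β) (S T : {r : List δ // 0 < r.length})
    (hST : S.1.tail = T.1) :
    (impl C (x :: xs) y S).1 =
      min (C.delete x + (impl C xs y T).1[0]'(impl C xs y T).2)
        (min (C.insert y + S.1[0]'S.2) (C.substitute x y + T.1[0]'T.2)) ::
        (impl C xs y T).1 := by
  obtain ⟨_ | ⟨d, ds⟩, hS⟩ := S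
  · simp at hS
  obtain ⟨T, hT⟩ := T
  subst hST
  obtain _ | ⟨e, ds⟩ := ds
  · simp at hT
  rfl

end Levenshtein

section

variable {α β δ : Type*} [Zero δ] [Add δ] [Min δ] (C : Levenshtein.Cost α β δ)

theorem suffixLevenshtein_cons_left_tail (x : α) (xs : List α) (ys : List β) :
    (suffixLevenshtein C (x :: xs) ys).1.tail = (suffixLevenshtein C xs ys).1 := by
  induction ys with
  | nil => rfl
  | cons y ys ih => exact congrArg List.tail (Levenshtein.impl_cons_val C x xs y _ _ ih)

theorem levenshtein_cons_cons (x : α) (xs : List α) (y : β) (ys : List β) :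
    levenshtein C (x :: xs) (y :: ys) =
      min (C.delete x + levenshtein C xs (y :: ys))
        (min (C.insert y + levenshtein C (x :: xs) ys)
          (C.substitute x y + levenshtein C xs ys)) :=
  List.getElem_of_eq
    (Levenshtein.impl_cons_val C x xs y _ _ (suffixLevenshtein_cons_left_tail C x xs ys)) _

end

section EditDistance

variable {α : Type*} [DecidableEq α]

theorem ED_cons_nil (x : α) (X : List α) : ED (x :: X) [] = 1 + ED X [] := rfl

theorem ED_cons_cons (x y : α) (X Y : List α) :
    ED (x :: X) (y :: Y) =
      min (1 + ED X (y :: Y)) (min (1 + ED (x :: X) Y) ((if x = y then 0 else 1) + ED X Y)) :=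
  levenshtein_cons_cons _ x X y Y

theorem ED_self (X : List α) : ED X X = 0 := by
  induction X with
  | nil => rfl
  | cons x X ih =>
    rw [ED_cons_cons]
    simp [ih]

theorem ED_singleton_toList_le (x : α) (o : Option α) : ED [x] o.toList ≤ 1 := by
  cases o with
  | none => rfl
  | some y =>
    rw [Option.toList_some, ED_cons_cons]
    split_ifs <;> simp [ED_self]

end EditDistance

/-- Position `p` of `X` is aligned with position `pos p` of `Y`, and `cost p` bounds the cost of
the alignment on the prefix `X[0..p)`. -/
structure EditAlignment {α : Type*} (X Y : List α) where
  pos : ℕ → ℕ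
  cost : ℕ → ℤ
  pos_zero : pos 0 = 0
  cost_zero : cost 0 = 0
  abs_pos_succ_sub_le : ∀ p, |(pos (p + 1) : ℤ) - pos p - 1| ≤ cost (p + 1) - cost p
  getElem?_pos_or_cost_succ : ∀ p < X.length, Y[pos p]? = X[p]? ∨ cost p + 1 ≤ cost (p + 1)

namespace EditAlignment

variable {α : Type*} {X Y : List α}

def ofNil (Y : List α) : EditAlignment [] Y where
  pos p := p
  cost _ := 0
  pos_zero := rfl
  cost_zero := rfl
  abs_pos_succ_sub_le p := by simp
  getElem?_pos_or_cost_succ p hp := absurd hp (Nat.not_lt_zero p)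

def delete (x : α) (A : EditAlignment X Y) : EditAlignment (x :: X) Y where
  pos | 0 => 0 | p + 1 => A.pos p
  cost | 0 => 0 | p + 1 => A.cost p + 1
  pos_zero := rfl
  cost_zero := rfl
  abs_pos_succ_sub_le
    | 0 => by simp [A.pos_zero, A.cost_zero]
    | p + 1 => by simpa using A.abs_pos_succ_sub_le p
  getElem?_pos_or_cost_succ
    | 0, _ => by simp [A.cost_zero]
    | p + 1, hp => by simpa using A.getElem?_pos_or_cost_succ p (by simpa using hp)

def insert (y : α) (A : EditAlignment X Y) : EditAlignment X (y :: Y) where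
  pos | 0 => 0 | p + 1 => A.pos (p + 1) + 1
  cost | 0 => 0 | p + 1 => A.cost (p + 1) + 1
  pos_zero := rfl
  cost_zero := rfl
  abs_pos_succ_sub_le
    | 0 => by
      have h := A.abs_pos_succ_sub_le 0
      norm_num [A.pos_zero, A.cost_zero, abs_le] at h ⊢
      linarith
    | p + 1 => by simpa using A.abs_pos_succ_sub_le (p + 1)
  getElem?_pos_or_cost_succ
    | 0, _ => by
      have h := (abs_nonneg _).trans (A.abs_pos_succ_sub_le 0)
      right
      simp only [A.cost_zero] at h ⊢
      linarith
    | p + 1, hp => by simpa using A.getElem?_pos_or_cost_succ (p + 1) hp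

def substitute [DecidableEq α] (x y : α) (A : EditAlignment X Y) :
    EditAlignment (x :: X) (y :: Y) where
  pos | 0 => 0 | p + 1 => A.pos p + 1
  cost | 0 => 0 | p + 1 => A.cost p + if x = y then 0 else 1
  pos_zero := rfl
  cost_zero := rfl
  abs_pos_succ_sub_le
    | 0 => by split_ifs <;> simp [A.pos_zero, A.cost_zero]
    | p + 1 => by simpa using A.abs_pos_succ_sub_le p
  getElem?_pos_or_cost_succ
    | 0, _ => by split_ifs with h <;> simp [A.cost_zero, h]
    | p + 1, hp => by simpa using A.getElem?_pos_or_cost_succ p (by simpa using hp)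

theorem exists_cost_le_ED [DecidableEq α] (X Y : List α) :
    ∃ A : EditAlignment X Y, A.cost X.length ≤ ED X Y := by
  induction X generalizing Y with
  | nil => exact ⟨ofNil Y, by simp [ofNil]⟩
  | cons x X ihX =>
    induction Y with
    | nil =>
      obtain ⟨A, hA⟩ := ihX []
      exact ⟨A.delete x, by change A.cost X.length + 1 ≤ ((1 + ED X [] : ℕ) : ℤ); omega⟩
    | cons y Y ihY =>
      obtain ⟨A, hA⟩ := ihX (y :: Y)
      obtain ⟨B, hB⟩ := ihY
      obtain ⟨D, hD⟩ := ihX Y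
      have hED := ED_cons_cons x y X Y
      obtain hdel | hins | hsub : ED (x :: X) (y :: Y) = 1 + ED X (y :: Y) ∨
          ED (x :: X) (y :: Y) = 1 + ED (x :: X) Y ∨
          ED (x :: X) (y :: Y) = (if x = y then 0 else 1) + ED X Y := by omega
      · exact ⟨A.delete x, by change A.cost X.length + 1 ≤ _; omega⟩
      · exact ⟨B.insert y, by change B.cost (x :: X).length + 1 ≤ _; omega⟩
      · refine ⟨D.substitute x y, ?_⟩
        change D.cost X.length + (if x = y then 0 else 1) ≤ _
        split_ifs at hsub ⊢ <;> omega

variable (A : EditAlignment X Y)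

def shift (p : ℕ) : ℤ := A.pos p - p

theorem shift_zero : A.shift 0 = 0 := by simp [shift, A.pos_zero]

theorem abs_shift_sub_le {p q : ℕ} (hpq : p ≤ q) :
    |A.shift q - A.shift p| ≤ A.cost q - A.cost p := by
  induction q, hpq using Nat.le_induction with
  | base => simp
  | succ q _ ih =>
    have hstep : A.shift (q + 1) - A.shift q = A.pos (q + 1) - A.pos q - 1 := by
      simp only [shift]; push_cast; ring
    calc |A.shift (q + 1) - A.shift p|
        ≤ |A.shift (q + 1) - A.shift q| + |A.shift q - A.shift p| := abs_sub_le _ _ _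
      _ ≤ (A.cost (q + 1) - A.cost q) + (A.cost q - A.cost p) :=
        add_le_add (hstep ▸ A.abs_pos_succ_sub_le q) ih
      _ = A.cost (q + 1) - A.cost p := by ring

theorem cost_mono : Monotone A.cost := fun _ _ hpq =>
  sub_nonneg.1 ((abs_nonneg _).trans (A.abs_shift_sub_le hpq))

theorem abs_shift_le {p : ℕ} (hp : p ≤ X.length) : |A.shift p| ≤ A.cost X.length := by
  simpa [A.shift_zero, A.cost_zero] using
    (A.abs_shift_sub_le (Nat.zero_le p)).trans (sub_le_sub_right (A.cost_mono hp) _)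

theorem ED_leaf_le [DecidableEq α] {p : ℕ} (hp : p < X.length) :
    (ED (strSlice X p (p + 1)) (strSliceZ Y (p + A.shift p) (p + 1 + A.shift p)) : ℤ) ≤
      A.cost (p + 1) - A.cost p := by
  have hX : strSlice X p (p + 1) = [X[p]] := by
    simp [strSlice, List.take_one_drop_eq_toList_getElem?, hp]
  have hY : strSliceZ Y (p + A.shift p) (p + 1 + A.shift p) = Y[A.pos p]?.toList := by
    rw [shift, show (p : ℤ) + (A.pos p - p) = A.pos p by ring,
      show (p : ℤ) + 1 + (A.pos p - p) = (A.pos p + 1 : ℕ) by push_cast; ring]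
    simp [strSliceZ, List.take_one_drop_eq_toList_getElem?]
  rw [hX, hY]
  rcases A.getElem?_pos_or_cost_succ p hp with hmatch | hcost
  · rw [hmatch, List.getElem?_eq_getElem hp, Option.toList_some, ED_self, Nat.cast_zero,
      sub_nonneg]
    exact A.cost_mono (Nat.le_succ p)
  · have := ED_singleton_toList_le X[p] Y[A.pos p]?
    omega

end EditAlignment

namespace PTree

mutual
theorem WF.le : ∀ {t : PTree} {a b : ℕ}, WF t a b → a ≤ b
  | _, _, _, .leaf i => Nat.le_succ i
  | _, _, _, .node _ _ _ _ h => h.le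
theorem WFs.le : ∀ {cs : List PTree} {a b : ℕ}, WFs cs a b → a ≤ b
  | _, _, _, .nil _ => le_rfl
  | _, _, _, .cons _ _ _ _ _ h hs => h.le.trans hs.le
end

variable {t : PTree} {lo hi : ℕ} {cs : List PTree}

theorem height_lt_of_mem (h : t ∈ cs) : t.height < (node lo hi cs).height := by
  rw [height, List.attach_map_val (f := height)]
  exact Nat.lt_succ_of_le (List.le_max_of_le' 0 (List.mem_map_of_mem h) le_rfl)

theorem maxDeg_le_of_mem (h : t ∈ cs) : t.maxDeg ≤ (node lo hi cs).maxDeg := by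
  rw [maxDeg, List.attach_map_val (f := maxDeg)]
  exact le_max_of_le_right (List.le_max_of_le' 0 (List.mem_map_of_mem h) le_rfl)

theorem length_le_maxDeg : cs.length ≤ (node lo hi cs).maxDeg := by
  rw [maxDeg]
  exact le_max_left _ _

end PTree

section TreeDistance

variable {α : Type*} [DecidableEq α] (X Y : List α) (L : ℕ)

noncomputable def minShiftTD (t : PTree) (s : ℤ) : ℕ :=
  (Finset.Icc (-(L : ℤ)) L).inf' ⟨0, by simp⟩ (fun s' => TD X Y L t s' + 2 * (s - s').natAbs)

theorem TD_leaf (i : ℕ) (s : ℤ) :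
    TD X Y L (.leaf i) s = ED (strSlice X i (i + 1)) (strSliceZ Y (i + s) (i + 1 + s)) := by
  rw [TD]

theorem TD_node (lo hi : ℕ) (cs : List PTree) (s : ℤ) :
    TD X Y L (.node lo hi cs) s = (cs.map (minShiftTD X Y L · s)).sum := by
  rw [TD]
  exact congrArg List.sum (List.attach_map_val (f := (minShiftTD X Y L · s)))

variable {X Y L}

theorem minShiftTD_le {t : PTree} {s s' : ℤ} (hs' : |s'| ≤ L) :
    minShiftTD X Y L t s ≤ TD X Y L t s' + 2 * (s - s').natAbs :=
  Finset.inf'_le _ (Finset.mem_Icc.2 (abs_le.1 hs'))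

end TreeDistance

namespace EditAlignment

variable {α : Type*} [DecidableEq α] {X Y : List α} (A : EditAlignment X Y) {L : ℕ}

theorem TD_leaf_shift_le {p : ℕ} (hp : p < X.length) :
    (TD X Y L (.leaf p) (A.shift p) : ℤ) ≤ A.cost (p + 1) - A.cost p := by
  rw [TD_leaf]
  exact A.ED_leaf_le hp

theorem minShiftTD_shift_le (hL : A.cost X.length ≤ L) {t : PTree} {a r : ℕ} (hra : r ≤ a)
    (ha : a ≤ X.length) :
    (minShiftTD X Y L t (A.shift r) : ℤ) ≤
      TD X Y L t (A.shift a) + 2 * (A.cost a - A.cost r) := by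
  have h := minShiftTD_le (X := X) (Y := Y) (t := t) (s := A.shift r)
    ((A.abs_shift_le ha).trans hL)
  zify at h
  rw [abs_sub_comm] at h
  linarith [A.abs_shift_sub_le hra]

theorem sum_minShiftTD_le (hL : A.cost X.length ≤ L) {K : ℤ} {r : ℕ} {cs : List PTree}
    (hK : ∀ t ∈ cs, ∀ a b, PTree.WF t a b → b ≤ X.length →
      (TD X Y L t (A.shift a) : ℤ) ≤ K * (A.cost b - A.cost a))
    {a b : ℕ} (hcs : PTree.WFs cs a b) (hra : r ≤ a) (hb : b ≤ X.length) :
    ((cs.map (minShiftTD X Y L · (A.shift r))).sum : ℤ) ≤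
      K * (A.cost b - A.cost a) + 2 * cs.length * (A.cost b - A.cost r) := by
  induction cs generalizing a with
  | nil =>
    cases hcs
    simp
  | cons t cs ih =>
    cases hcs with
    | cons _ _ _ m _ ht hcs =>
      have hhead := A.minShiftTD_shift_le hL (t := t) hra (ht.le.trans (hcs.le.trans hb))
      have htail := ih (fun t' ht' => hK t' (List.mem_cons_of_mem t ht')) hcs
        (hra.trans ht.le)
      have hTD := hK t List.mem_cons_self a m ht (hcs.le.trans hb)
      have hmono := A.cost_mono (ht.le.trans hcs.le)
      simp only [List.map_cons, List.sum_cons, List.length_cons, Nat.cast_add, Nat.cast_succ]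
      linarith

theorem TD_shift_le (hL : A.cost X.length ≤ L) {ℓ : ℕ} (H : ℕ) {t : PTree} {a b : ℕ}
    (hwf : t.WF a b) (hb : b ≤ X.length) (hdeg : t.maxDeg ≤ ℓ) (hH : t.height ≤ H) :
    (TD X Y L t (A.shift a) : ℤ) ≤ (2 * (ℓ - 1) * H + 1 : ℕ) * (A.cost b - A.cost a) := by
  induction H generalizing t a b with
  | zero =>
    cases hwf with
    | leaf p => simpa using A.TD_leaf_shift_le hb
    | node => simp [PTree.height] at hH
  | succ H ih =>
    cases hwf with
    | leaf p =>
      exact (A.TD_leaf_shift_le hb).trans (le_mul_of_one_le_left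
        (sub_nonneg.2 (A.cost_mono (Nat.le_succ _))) (by exact_mod_cast Nat.le_add_left 1 _))
    | node a b cs hne hcs =>
      have hchild : ∀ t ∈ cs, ∀ a b, t.WF a b → b ≤ X.length →
          (TD X Y L t (A.shift a) : ℤ) ≤
            (2 * (ℓ - 1) * H + 1 : ℕ) * (A.cost b - A.cost a) :=
        fun t ht a b hwf hb => ih hwf hb ((PTree.maxDeg_le_of_mem ht).trans hdeg)
          (Nat.le_of_lt_succ ((PTree.height_lt_of_mem ht).trans_le hH))
      obtain ⟨c, cs, rfl⟩ := List.exists_cons_of_ne_nil hne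
      cases hcs with
      | cons _ _ _ m _ hc hcs =>
        have hhead :=
          (A.minShiftTD_shift_le hL (t := c) le_rfl (hc.le.trans (hcs.le.trans hb))).trans
            (by simpa using hchild c List.mem_cons_self a m hc (hcs.le.trans hb))
        have htail := A.sum_minShiftTD_le hL (fun t ht => hchild t (List.mem_cons_of_mem c ht))
          hcs hc.le hb
        have hlen : cs.length ≤ ℓ - 1 := by
          have := (PTree.length_le_maxDeg (cs := c :: cs)).trans hdeg
          rw [List.length_cons] at this
          omega
        have hrest := mul_le_mul_of_nonneg_right (Nat.cast_le (α := ℤ).2 hlen)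
          (sub_nonneg.2 (A.cost_mono (hc.le.trans hcs.le)))
        rw [TD_node, List.map_cons, List.sum_cons]
        push_cast at hhead htail ⊢
        linarith

end EditAlignment

/-- Upper bound on the shift-restricted tree distance: if the partition tree has maximum
degree `ℓ` and height at most `h`, and `ED(X, Y) ≤ L`, then at the root (shift 0)
`TD^L(X, Y) ≤ (2(ℓ−1)h + 1) · ED(X, Y)`. -/
theorem td_le_ed {α : Type*} [DecidableEq α] (X Y : List α) (n : ℕ)
    (hX : X.length = n) (hY : Y.length = n) (L : ℕ) (t : PTree) (hwf : PTree.WF t 0 n)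
    (ℓ h : ℕ) (hdeg : PTree.maxDeg t ≤ ℓ) (hht : PTree.height t ≤ h)
    (hED : ED X Y ≤ L) :
    TD X Y L t 0 ≤ (2 * (ℓ - 1) * h + 1) * ED X Y := by
  subst hX
  obtain ⟨A, hA⟩ := EditAlignment.exists_cost_le_ED X Y
  have hbound := A.TD_shift_le (hA.trans (by exact_mod_cast hED)) h hwf le_rfl hdeg hht
  rw [A.shift_zero, A.cost_zero, sub_zero] at hbound
  exact_mod_cast hbound.trans (mul_le_mul_of_nonneg_left hA (by positivity))
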